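/- Let u : ℝ × ℝⁿ → ℝ be continuously differentiable in t with ∫_ℝ ∫_{ℝⁿ} |∂u/∂t|² dx dt < ∞. Let (m_k) be a sequence of real numbers with m_k → ∞, and suppose the time-translates satisfy ∂u/∂t (t + m_k, x) → g(t, x) as k → ∞, uniformly on compact subsets of ℝ^{n+1}, for some continuous g. Then g ≡ 0. In particular, if in addition u solves the PDE ∂u/∂t = Δu + P(u) and u(t + m_k, x) → v(t, x) locally uniformly together with the derivatives appearing in the equation, then the limit v is independent of t and is an equilibrium: Δv + P(v) = 0. -/

import Mathlib

open MeasureTheory Filter Topology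
open scoped ENNReal

noncomputable section

/-- Euclidean space `ℝⁿ`. -/
abbrev Spc (n : ℕ) := EuclideanSpace ℝ (Fin n)

/-- The Laplacian in the spatial variables. -/
noncomputable def lap {n : ℕ} (f : Spc n → ℝ) (x : Spc n) : ℝ :=
  ∑ i : Fin n, fderiv ℝ (fun y => fderiv ℝ f y (EuclideanSpace.single i 1)) x
    (EuclideanSpace.single i 1)

/-- The polynomial nonlinearity `P(f)(x) = -f(x)^N + ∑_{i<N} aᵢ(x) f(x)^i`. -/
noncomputable def Pfun {n N : ℕ} (a : Fin N → Spc n → ℝ) (f : Spc n → ℝ) (x : Spc n) : ℝ :=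
  -(f x) ^ N + ∑ i : Fin N, a i x * f x ^ (i : ℕ)

/-- The time derivative `∂u/∂t`. -/
noncomputable def timeDeriv {n : ℕ} (u : ℝ × Spc n → ℝ) (t : ℝ) (x : Spc n) : ℝ :=
  deriv (fun s => u (s, x)) t

/-- `u` is a global solution of `∂u/∂t = Δu + P(u)`. -/
def IsSol {n N : ℕ} (a : Fin N → Spc n → ℝ) (u : ℝ × Spc n → ℝ) : Prop :=
  ∀ t x, timeDeriv u t x = lap (fun y => u (t, y)) x + Pfun a (fun y => u (t, y)) x

/-- `w` is an equilibrium: `Δw + P(w) = 0`. -/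
def IsEquilibrium {n N : ℕ} (a : Fin N → Spc n → ℝ) (w : Spc n → ℝ) : Prop :=
  ∀ x, lap w x + Pfun a w x = 0

/-- The energy density `|∂u/∂t|² + |Δu + P(u)|²`. -/
noncomputable def energyDensity {n N : ℕ} (a : Fin N → Spc n → ℝ) (u : ℝ × Spc n → ℝ)
    (t : ℝ) (x : Spc n) : ℝ :=
  (timeDeriv u t x) ^ 2 + (lap (fun y => u (t, y)) x + Pfun a (fun y => u (t, y)) x) ^ 2

/-- The energy `E(u) = (1/2) ∫_ℝ ∫_{ℝⁿ} (|∂u/∂t|² + |Δu + P(u)|²) dx dt`, valued in `ℝ≥0∞`. -/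
noncomputable def energy {n N : ℕ} (a : Fin N → Spc n → ℝ) (u : ℝ × Spc n → ℝ) : ℝ≥0∞ :=
  (1 / 2) * ∫⁻ t : ℝ, ∫⁻ x : Spc n, ENNReal.ofReal (energyDensity a u t x)

/-- The action density `(1/2)|∇f|² + f^{N+1}/(N+1) - ∑_{i<N} aᵢ f^{i+1}/(i+1)`. -/
noncomputable def actionDensity {n N : ℕ} (a : Fin N → Spc n → ℝ) (f : Spc n → ℝ)
    (x : Spc n) : ℝ :=
  (1 / 2) * ‖gradient f x‖ ^ 2 + f x ^ (N + 1) / (N + 1)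
    - ∑ i : Fin N, a i x * f x ^ ((i : ℕ) + 1) / ((i : ℕ) + 1)

/-- The action functional `A(f)`. -/
noncomputable def action {n N : ℕ} (a : Fin N → Spc n → ℝ) (f : Spc n → ℝ) : ℝ :=
  ∫ x : Spc n, actionDensity a f x

/-- `f` has finite action. -/
def FiniteAction {n N : ℕ} (a : Fin N → Spc n → ℝ) (f : Spc n → ℝ) : Prop :=
  Integrable (actionDensity a f)

/-- The coefficients `aᵢ` are smooth, in `L¹ ∩ L∞`, with all derivatives of all orders
bounded. -/
def GoodCoeffs {n N : ℕ} (a : Fin N → Spc n → ℝ) : Prop :=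
  ∀ i, ContDiff ℝ (⊤ : ℕ∞) (a i) ∧ Integrable (a i) ∧
    ∀ k : ℕ, ∃ C : ℝ, ∀ x, ‖iteratedFDeriv ℝ k (a i) x‖ ≤ C

/-- `u`, `∂u/∂t` and the spatial derivatives of `u` up to order two are bounded by a
constant multiple of `(1+|x|)^{-(n+1)}`, uniformly for `t` in compact intervals. -/
def AdmissibleDecay {n : ℕ} (u : ℝ × Spc n → ℝ) : Prop :=
  ∀ T > (0 : ℝ), ∃ C : ℝ, ∀ t : ℝ, ∀ x : Spc n, |t| ≤ T →
    |u (t, x)| ≤ C * (1 + ‖x‖) ^ (-(n + 1 : ℝ)) ∧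
    |timeDeriv u t x| ≤ C * (1 + ‖x‖) ^ (-(n + 1 : ℝ)) ∧
    ‖fderiv ℝ (fun y => u (t, y)) x‖ ≤ C * (1 + ‖x‖) ^ (-(n + 1 : ℝ)) ∧
    ‖iteratedFDeriv ℝ 2 (fun y => u (t, y)) x‖ ≤ C * (1 + ‖x‖) ^ (-(n + 1 : ℝ))

/-! If the limit `g` of the translates of `∂u/∂t` were nonzero at some point, then on a small
box around it every late translate would be bounded away from zero, so each would put a fixed
amount of `∫∫ |∂u/∂t|²` into a window of times escaping to `+∞`; but the mass of such windows
tends to zero when the total integral is finite. Once `g = 0`, the translates of `u(·, x)` have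
derivatives tending to zero locally uniformly, so their limit `v(·, x)` is constant, and passing
to the limit in the equation at a single time gives `Δv + P(v) = 0`. -/

open Set

theorem tendsto_setLIntegral_Icc_add_atTop_zero {μ : Measure ℝ} {F : ℝ → ℝ≥0∞}
    (hF : ∫⁻ t, F t ∂μ ≠ ⊤) (r : ℝ) :
    Tendsto (fun s => ∫⁻ t in Icc s (s + r), F t ∂μ) atTop (𝓝 0) := by
  refine ENNReal.tendsto_nhds_zero.2 fun ε hε => ?_
  by_contra hfreq
  simp only [not_eventually, not_le, frequently_atTop] at hfreq
  -- Infinitely many disjoint windows each carry mass `> ε`.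
  have htail : ∀ (J : ℕ) (M : ℝ), J * ε ≤ ∫⁻ t in Ici M, F t ∂μ := by
    intro J
    induction J with
    | zero => simp
    | succ J ih =>
      intro M
      obtain ⟨s, hs, hwin⟩ := hfreq (max M (M - r))
      have hdisj : Disjoint (Icc s (s + r)) (Ici (s + r + 1)) :=
        disjoint_left.2 fun t ht ht' => by linarith [ht.2, mem_Ici.1 ht']
      have hsub : Icc s (s + r) ∪ Ici (s + r + 1) ⊆ Ici M := by
        rintro t (ht | ht) <;> simp only [mem_Icc, mem_Ici, max_le_iff] at * <;> linarith
      calc ((J + 1 : ℕ) : ℝ≥0∞) * ε = ε + J * ε := by push_cast; ring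
        _ ≤ (∫⁻ t in Icc s (s + r), F t ∂μ) + ∫⁻ t in Ici (s + r + 1), F t ∂μ :=
            add_le_add hwin.le (ih _)
        _ = ∫⁻ t in Icc s (s + r) ∪ Ici (s + r + 1), F t ∂μ := by
            rw [Measure.restrict_union hdisj measurableSet_Ici, lintegral_add_measure]
        _ ≤ ∫⁻ t in Ici M, F t ∂μ := lintegral_mono' (Measure.restrict_mono hsub le_rfl) le_rfl
  obtain ⟨J, hJ⟩ := ENNReal.exists_nat_mul_gt hε.ne' hF
  exact (hJ.trans_le ((htail J 0).trans (setLIntegral_le_lintegral _ _))).false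

theorem mul_measure_mul_measure_le_setLIntegral_lintegral {α β : Type*} [MeasurableSpace α]
    [MeasurableSpace β] {μ : Measure α} {ν : Measure β} {f : α → β → ℝ≥0∞} {S : Set α}
    {B : Set β} (hS : MeasurableSet S) (hB : MeasurableSet B) {c : ℝ≥0∞}
    (hf : ∀ s ∈ S, ∀ x ∈ B, c ≤ f s x) :
    c * ν B * μ S ≤ ∫⁻ s in S, ∫⁻ x, f s x ∂ν ∂μ :=
  calc c * ν B * μ S = ∫⁻ _ in S, c * ν B ∂μ := (setLIntegral_const S _).symm
    _ ≤ ∫⁻ s in S, ∫⁻ x, f s x ∂ν ∂μ := setLIntegral_mono' hS fun s hs =>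
        (setLIntegral_const B c).symm.trans_le
          ((setLIntegral_mono' hB (hf s hs)).trans (setLIntegral_le_lintegral _ _))

theorem TendstoLocallyUniformly.exists_mem_nhds_eventually_lt_abs {ι X : Type*}
    [TopologicalSpace X] {l : Filter ι} {F : ι → X → ℝ} {g : X → ℝ}
    (hF : TendstoLocallyUniformly F g l) {x₀ : X} (hg : ContinuousAt g x₀) {c : ℝ}
    (hc : c < |g x₀|) : ∃ U ∈ 𝓝 x₀, ∀ᶠ i in l, ∀ x ∈ U, c < |F i x| := by
  set ε := (|g x₀| - c) / 2
  have hε : 0 < ε := by simp only [ε]; linarith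
  obtain ⟨t, ht, hFt⟩ := Metric.tendstoLocallyUniformly_iff.1 hF ε hε x₀
  have hgx : ∀ᶠ x in 𝓝 x₀, c + ε < |g x| :=
    hg.abs.eventually (lt_mem_nhds (by simp only [ε]; linarith))
  refine ⟨t ∩ {x | c + ε < |g x|}, inter_mem ht hgx, hFt.mono fun i hi x hx => ?_⟩
  have hclose := hi x hx.1
  rw [Real.dist_eq] at hclose
  linarith [hx.2.out, abs_sub_abs_le_abs_sub (g x) (F i x)]

theorem eq_zero_of_tendstoLocallyUniformly_translate {ι E : Type*} [PseudoMetricSpace E]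
    [MeasurableSpace E] [OpensMeasurableSpace E] {μ : Measure E} [μ.IsOpenPosMeasure]
    {l : Filter ι} [l.NeBot] {h g : ℝ × E → ℝ}
    (hh : ∫⁻ t, ∫⁻ x, ENNReal.ofReal (h (t, x) ^ 2) ∂μ ≠ ⊤) {m : ι → ℝ}
    (hm : Tendsto m l atTop) (hg : Continuous g)
    (hconv : TendstoLocallyUniformly (fun i p => h (p.1 + m i, p.2)) g l) : g = 0 := by
  funext p₀
  by_contra hp₀
  rw [Pi.zero_apply] at hp₀
  have hgp₀ : 0 < |g p₀| := abs_pos.2 hp₀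
  set c := |g p₀| / 2
  obtain ⟨U, hU, hlow⟩ :=
    hconv.exists_mem_nhds_eventually_lt_abs hg.continuousAt (half_lt_self hgp₀)
  obtain ⟨r, hr, hrU⟩ := Metric.nhds_basis_closedBall.mem_iff.1 hU
  set mass := ENNReal.ofReal (c ^ 2) * μ (Metric.closedBall p₀.2 r) * ENNReal.ofReal (2 * r)
  have hmass : mass ≠ 0 := mul_ne_zero (mul_ne_zero (by simp [c, hp₀])
    (Metric.measure_closedBall_pos μ _ hr).ne') (by simp [hr])
  have hwin : ∀ᶠ i in l, mass ≤ ∫⁻ s in Icc (p₀.1 - r + m i) (p₀.1 - r + m i + 2 * r),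
      ∫⁻ x, ENNReal.ofReal (h (s, x) ^ 2) ∂μ := by
    filter_upwards [hlow] with i hi
    have hvol : volume (Icc (p₀.1 - r + m i) (p₀.1 - r + m i + 2 * r)) =
        ENNReal.ofReal (2 * r) := by
      simp [Real.volume_Icc]
    simp only [mass, ← hvol]
    refine mul_measure_mul_measure_le_setLIntegral_lintegral measurableSet_Icc
      measurableSet_closedBall fun s hs x hx => ENNReal.ofReal_le_ofReal ?_
    have hmem : (s - m i, x) ∈ Metric.closedBall p₀ r := by
      rw [← closedBall_prod_same, Real.closedBall_eq_Icc]
      exact ⟨⟨by linarith [hs.1], by linarith [hs.2]⟩, hx⟩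
    have hsx : c < |h (s, x)| := by simpa using hi _ (hrU hmem)
    simpa only [sq_abs] using pow_le_pow_left₀ (half_pos hgp₀).le hsx.le 2
  have htend := (tendsto_setLIntegral_Icc_add_atTop_zero hh (2 * r)).comp
    (tendsto_atTop_add_const_left _ (p₀.1 - r) hm)
  exact hmass (nonpos_iff_eq_zero.1 (ge_of_tendsto htend hwin))

theorem eq_of_tendstoLocallyUniformly_deriv_zero {ι : Type*} {l : Filter ι} [l.NeBot]
    {f f' : ι → ℝ → ℝ} {φ : ℝ → ℝ} (hf : ∀ i s, HasDerivAt (f i) (f' i s) s)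
    (hf' : TendstoLocallyUniformly f' 0 l) (hφ : ∀ s, Tendsto (f · s) l (𝓝 (φ s)))
    (s t : ℝ) : φ s = φ t := by
  have hφ' : ∀ s, HasDerivAt φ 0 s := fun s =>
    hasDerivAt_of_tendstoLocallyUniformlyOn isOpen_univ (tendstoLocallyUniformlyOn_univ.2 hf')
      (Eventually.of_forall fun i s _ => hf i s) (fun s _ => hφ s) (mem_univ s)
  exact is_const_of_deriv_eq_zero (fun s => (hφ' s).differentiableAt) (fun s => (hφ' s).deriv)
    s t

theorem tendsto_Pfun {n N : ℕ} (a : Fin N → Spc n → ℝ) {ι : Type*} {l : Filter ι}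
    {f : ι → Spc n → ℝ} {w : Spc n → ℝ} {x : Spc n}
    (hf : Tendsto (fun i => f i x) l (𝓝 (w x))) :
    Tendsto (fun i => Pfun a (f i) x) l (𝓝 (Pfun a w x)) := by
  have hP : Continuous fun r : ℝ => -r ^ N + ∑ j : Fin N, a j x * r ^ (j : ℕ) := by fun_prop
  exact (hP.tendsto _).comp hf

theorem IsSol.lap_add_Pfun_eq_zero_of_tendsto {n N : ℕ} {a : Fin N → Spc n → ℝ}
    {u : ℝ × Spc n → ℝ} (hu : IsSol a u) {ι : Type*} {l : Filter ι} [l.NeBot] {t : ι → ℝ}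
    {w : Spc n → ℝ} {x : Spc n} (hdt : Tendsto (fun i => timeDeriv u (t i) x) l (𝓝 0))
    (hu₀ : Tendsto (fun i => u (t i, x)) l (𝓝 (w x)))
    (hlap : Tendsto (fun i => lap (fun y => u (t i, y)) x) l (𝓝 (lap w x))) :
    lap w x + Pfun a w x = 0 :=
  tendsto_nhds_unique ((hlap.add (tendsto_Pfun a (f := fun i y => u (t i, y)) hu₀)).congr
    fun i => (hu (t i) x).symm) hdt

theorem limit_of_translates_is_equilibrium_general
    {n N : ℕ}
    (a : Fin N → Spc n → ℝ)
    (u : ℝ × Spc n → ℝ)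
    (hC1 : ∀ x : Spc n, ContDiff ℝ 1 (fun t : ℝ => u (t, x)))
    (hint : (∫⁻ t : ℝ, ∫⁻ x : Spc n, ENNReal.ofReal ((timeDeriv u t x) ^ 2)) < ⊤)
    (m : ℕ → ℝ) (hm : Tendsto m atTop atTop)
    (g : ℝ × Spc n → ℝ) (hg : Continuous g)
    (hconv : ∀ K : Set (ℝ × Spc n), IsCompact K →
      TendstoUniformlyOn (fun (k : ℕ) (p : ℝ × Spc n) => timeDeriv u (p.1 + m k) p.2)
        g atTop K) :
    (∀ p : ℝ × Spc n, g p = 0) ∧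
    (∀ v : ℝ × Spc n → ℝ, IsSol a u →
      (∀ K : Set (ℝ × Spc n), IsCompact K →
        TendstoUniformlyOn (fun (k : ℕ) (p : ℝ × Spc n) => u (p.1 + m k, p.2)) v atTop K ∧
        TendstoUniformlyOn (fun (k : ℕ) (p : ℝ × Spc n) => timeDeriv u (p.1 + m k) p.2)
          (fun p => timeDeriv v p.1 p.2) atTop K ∧
        TendstoUniformlyOn
          (fun (k : ℕ) (p : ℝ × Spc n) => lap (fun y => u (p.1 + m k, y)) p.2)
          (fun p => lap (fun y => v (p.1, y)) p.2) atTop K) →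
      (∀ (t t' : ℝ) (x : Spc n), v (t, x) = v (t', x)) ∧
      IsEquilibrium a (fun x => v (0, x))) := by
  have hloc := tendstoLocallyUniformly_iff_forall_isCompact.2 hconv
  obtain rfl : g = 0 := eq_zero_of_tendstoLocallyUniformly_translate
    (h := fun p => timeDeriv u p.1 p.2) hint.ne hm hg hloc
  refine ⟨fun _ => rfl, fun v hu hv => ⟨fun t t' x => ?_, fun x => ?_⟩⟩
  · have hderiv : ∀ k s, HasDerivAt (fun s => u (s + m k, x)) (timeDeriv u (s + m k) x) s :=
      fun k s => ((hC1 x).differentiable one_ne_zero (s + m k)).hasDerivAt.comp_add_const s (m k)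
    exact eq_of_tendstoLocallyUniformly_deriv_zero hderiv
      (hloc.comp (fun s => (s, x)) (by fun_prop))
      (fun s => (hv {(s, x)} isCompact_singleton).1.tendsto_at rfl) t t'
  · obtain ⟨hu₀, -, hlap⟩ := hv {(0, x)} isCompact_singleton
    have hdt := (hconv {(0, x)} isCompact_singleton).tendsto_at (mem_singleton _)
    have hu₀x := hu₀.tendsto_at (mem_singleton _)
    have hlapx := hlap.tendsto_at (mem_singleton _)
    exact hu.lap_add_Pfun_eq_zero_of_tendsto (w := fun y => v (0, y)) hdt hu₀x hlapx

/-- If `u` is continuously differentiable in `t` with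
`∫∫ |∂u/∂t|² < ∞`, `m_k → ∞`, and the time-translates `∂u/∂t(· + m_k, ·)` converge locally
uniformly to a continuous `g`, then `g ≡ 0`.  In particular, if moreover `u` solves the
PDE and the translates `u(· + m_k, ·)` converge locally uniformly to `v` together with the
derivatives appearing in the equation, then `v` is independent of `t` and is an
equilibrium. -/
theorem limit_of_translates_is_equilibrium
    {n N : ℕ} (hn : 1 ≤ n) (hN : 2 ≤ N)
    (a : Fin N → Spc n → ℝ) (ha : GoodCoeffs a)
    (u : ℝ × Spc n → ℝ)
    (hC1 : ∀ x : Spc n, ContDiff ℝ 1 (fun t : ℝ => u (t, x)))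
    (hint : (∫⁻ t : ℝ, ∫⁻ x : Spc n, ENNReal.ofReal ((timeDeriv u t x) ^ 2)) < ⊤)
    (m : ℕ → ℝ) (hm : Tendsto m atTop atTop)
    (g : ℝ × Spc n → ℝ) (hg : Continuous g)
    (hconv : ∀ K : Set (ℝ × Spc n), IsCompact K →
      TendstoUniformlyOn (fun (k : ℕ) (p : ℝ × Spc n) => timeDeriv u (p.1 + m k) p.2)
        g atTop K) :
    (∀ p : ℝ × Spc n, g p = 0) ∧
    (∀ v : ℝ × Spc n → ℝ, IsSol a u →
      (∀ K : Set (ℝ × Spc n), IsCompact K →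
        TendstoUniformlyOn (fun (k : ℕ) (p : ℝ × Spc n) => u (p.1 + m k, p.2)) v atTop K ∧
        TendstoUniformlyOn (fun (k : ℕ) (p : ℝ × Spc n) => timeDeriv u (p.1 + m k) p.2)
          (fun p => timeDeriv v p.1 p.2) atTop K ∧
        TendstoUniformlyOn
          (fun (k : ℕ) (p : ℝ × Spc n) => lap (fun y => u (p.1 + m k, y)) p.2)
          (fun p => lap (fun y => v (p.1, y)) p.2) atTop K) →
      (∀ (t t' : ℝ) (x : Spc n), v (t, x) = v (t', x)) ∧
      IsEquilibrium a (fun x => v (0, x))) :=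
  limit_of_translates_is_equilibrium_general a u hC1 hint m hm g hg hconv

end
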